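/- arXiv:1108.5197 — 5 statements merged into one kernel-verified Lean document; each statement's English description precedes it below -/
import Mathlib

section
/- For every z ∈ ℂ with Im z > 1 and all real x and t, the function μ ↦ f(z,μ,x,t) is real-analytic on the open interval (0,∞); in particular it is analytic at μ = 2, even though T(μ) = √(μ²/4 − 1) is not differentiable there. -/
/-!
For `μ ≠ 2` the square root `T` is real-analytic in `μ` (for `μ < 2` it equals
`I * (1 - μ²/4) ^ (1/2)`, a principal root of a positive number), and for `μ > 0`, `Im z > 1`
every logarithm in `f` is taken off the branch cut, so `f` is a composition of analytic functions.

At `μ = 2`, where `T` is not analytic, the `T`-dependent part of `f` is even in `T`. With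
`u = T / z`, the two logarithms of `z ± T` combine to
`z log z + (z/2) log (1 - T²/z²) + T artanh u`, and `artanh u = u A(u²)`, where
`A(v) = ∑ vⁿ/(2n+1)` (the sum of `artanhSeries`) is analytic on the unit disc. Hence near `μ = 2`
the function `f` is an analytic expression in `μ` and `T² = μ²/4 - 1`.
-/

open Complex

/-- The principal square root `T(μ) = √(μ²/4 − 1)` (as a complex number). -/
noncomputable def T (μ : ℝ) : ℂ := ((μ : ℂ)^2/4 - 1) ^ ((1 : ℂ)/2)

/-- `artanh(w) = (1/2)·log((1+w)/(1−w))` with the principal logarithm. -/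
noncomputable def artanh (w : ℂ) : ℂ := (1/2) * Complex.log ((1 + w)/(1 - w))

/-- The semiclassical NLS phase function `f(z,μ,x,t)`. -/
noncomputable def f (z : ℂ) (μ x t : ℝ) : ℂ :=
  ((μ : ℂ)/2 - z) * (Real.pi * Complex.I / 2 + Complex.log ((μ : ℂ)/2 - z))
    + ((z + T μ)/2) * Complex.log (z + T μ)
    + ((z - T μ)/2) * Complex.log (z - T μ)
    - T μ * artanh (2 * T μ / (μ : ℂ))
    - (x : ℂ) * z - 2 * (t : ℂ) * z^2
    + ((μ : ℂ)/2) * Complex.log 2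

open FormalMultilinearSeries Filter
open scoped Topology

lemma log_mul_of_re_pos {a b : ℂ} (ha : 0 < a.re) (hb : 0 < b.re) :
    log (a * b) = log a + log b := by
  have ha' := abs_lt.1 (abs_arg_lt_pi_div_two_iff.2 (Or.inl ha))
  have hb' := abs_lt.1 (abs_arg_lt_pi_div_two_iff.2 (Or.inl hb))
  refine (log_mul_eq_add_log_iff (ne_zero_of_re_pos ha) (ne_zero_of_re_pos hb)).2 ⟨?_, ?_⟩ <;>
    linarith

lemma log_div_of_re_pos {a b : ℂ} (ha : 0 < a.re) (hb : 0 < b.re) :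
    log (a / b) = log a - log b := by
  have hb' : 0 < b⁻¹.re := by
    rw [inv_re]; exact div_pos hb (normSq_pos.2 (ne_zero_of_re_pos hb))
  rw [div_eq_mul_inv, log_mul_of_re_pos ha hb', log_inv _ (arg_lt_pi_iff.2 (Or.inl hb.le)).ne,
    sub_eq_add_neg]

lemma log_mul_of_im_pos {a b : ℂ} (ha : 0 < a.im) (hb : 0 < b.re) (hab : 0 < (a * b).im) :
    log (a * b) = log a + log b := by
  have ha' : 0 ≤ arg a := arg_nonneg_iff.2 ha.le
  have hb' := abs_lt.1 (abs_arg_lt_pi_div_two_iff.2 (Or.inl hb))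
  refine (log_mul_eq_add_log_iff (fun h => by simp [h] at ha) (ne_zero_of_re_pos hb)).2
    ⟨by linarith, ?_⟩
  by_contra! h
  have hsin : (a * b).im = ‖a‖ * ‖b‖ * Real.sin (arg a + arg b) := by
    rw [Real.sin_add, mul_im, ← norm_mul_sin_arg a, ← norm_mul_cos_arg a,
      ← norm_mul_sin_arg b, ← norm_mul_cos_arg b]
    ring
  have hneg : Real.sin (arg a + arg b) < 0 := by
    rw [← neg_pos, ← Real.sin_sub_pi]
    exact Real.sin_pos_of_pos_of_lt_pi (by linarith) (by linarith [arg_le_pi a])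
  have := mul_nonneg (norm_nonneg a) (norm_nonneg b)
  nlinarith

lemma artanh_eq_I_mul_arctan (u : ℂ) : artanh u = I * arctan (-(I * u)) := by
  have h : -(I * u) * I = u := by linear_combination (-u) * I_sq
  rw [artanh, arctan, h]
  linear_combination (log ((1 + u) / (1 - u)) / 2) * I_sq

lemma hasSum_artanh {u : ℂ} (hu : ‖u‖ < 1) :
    HasSum (fun n : ℕ => u ^ (2 * n + 1) / (2 * n + 1)) (artanh u) := by
  have hterm (n : ℕ) : I * ((-1) ^ n * (-(I * u)) ^ (2 * n + 1) / ↑(2 * n + 1)) =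
      u ^ (2 * n + 1) / (2 * n + 1) := by
    have hpow : (-(I * u)) ^ (2 * n + 1) = -((-1) ^ n * I * u ^ (2 * n + 1)) := by
      rw [Odd.neg_pow (odd_two_mul_add_one n), mul_pow, pow_succ, pow_mul, I_sq]
    have hsign : ((-1 : ℂ) ^ n) ^ 2 = 1 := by rw [← pow_mul, pow_mul', neg_one_sq, one_pow]
    rw [hpow]
    push_cast
    linear_combination (-((-1) ^ n) ^ 2 * (u ^ (2 * n + 1) / (2 * n + 1))) * I_sq
      + (u ^ (2 * n + 1) / (2 * n + 1)) * hsign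
  rw [artanh_eq_I_mul_arctan]
  simpa only [hterm] using (hasSum_arctan (z := -(I * u)) (by simpa using hu)).mul_left I

noncomputable def artanhSeries : FormalMultilinearSeries ℂ ℂ ℂ :=
  ofScalars ℂ fun n : ℕ => ((2 * n + 1 : ℂ))⁻¹

lemma one_le_radius_artanhSeries : 1 ≤ artanhSeries.radius := by
  refine le_radius_of_bound _ 1 fun n => ?_
  rw [artanhSeries, ofScalars_norm, NNReal.coe_one, one_pow, mul_one, norm_inv]
  apply inv_le_one_of_one_le₀
  rw [show (2 * (n : ℂ) + 1) = ((2 * n + 1 : ℝ) : ℂ) by push_cast; ring, norm_real,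
    Real.norm_of_nonneg (by positivity)]
  linarith [n.cast_nonneg (α := ℝ)]

lemma mem_eball_radius_artanhSeries {v : ℂ} (hv : ‖v‖ < 1) :
    v ∈ Metric.eball (0 : ℂ) artanhSeries.radius := by
  refine lt_of_lt_of_le ?_ one_le_radius_artanhSeries
  rw [edist_zero_right, ← ofReal_norm, ENNReal.ofReal_lt_one]
  exact hv

lemma hasSum_artanhSeries {v : ℂ} (hv : ‖v‖ < 1) :
    HasSum (fun n : ℕ => v ^ n / (2 * n + 1)) (artanhSeries.sum v) := by
  have hterm (n : ℕ) : artanhSeries n (fun _ => v) = v ^ n / (2 * n + 1) := by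
    simp only [artanhSeries, ofScalars_apply_eq, smul_eq_mul, div_eq_inv_mul]
  simpa only [hterm] using artanhSeries.hasSum (mem_eball_radius_artanhSeries hv)

lemma analyticAt_artanhSeries_sum {v : ℂ} (hv : ‖v‖ < 1) :
    AnalyticAt ℂ artanhSeries.sum v :=
  (artanhSeries.hasFPowerSeriesOnBall
    (zero_lt_one.trans_le one_le_radius_artanhSeries)).analyticAt_of_mem
      (mem_eball_radius_artanhSeries hv)

lemma artanh_eq_mul_artanhSeries_sum {u : ℂ} (hu : ‖u‖ < 1) :
    artanh u = u * artanhSeries.sum (u ^ 2) := by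
  have hu2 : ‖u ^ 2‖ < 1 := by
    rw [norm_pow]; exact pow_lt_one₀ (norm_nonneg u) hu two_ne_zero
  refine (hasSum_artanh hu).unique ?_
  simpa only [← pow_mul, mul_div_assoc', ← pow_succ'] using (hasSum_artanhSeries hu2).mul_left u

lemma one_sub_ne_zero_of_norm_lt_one_or_im_ne_zero {w : ℂ} (h : ‖w‖ < 1 ∨ w.im ≠ 0) :
    1 - w ≠ 0 := by
  rintro hw
  obtain rfl : w = 1 := (sub_eq_zero.1 hw).symm
  simp at h

lemma one_add_div_one_sub_mem_slitPlane {w : ℂ} (h : ‖w‖ < 1 ∨ w.im ≠ 0) :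
    (1 + w) / (1 - w) ∈ slitPlane := by
  have hn : 0 < normSq (1 - w) := normSq_pos.2 (one_sub_ne_zero_of_norm_lt_one_or_im_ne_zero h)
  rw [mem_slitPlane_iff, div_re, div_im]
  simp only [add_re, one_re, sub_re, add_im, one_im, sub_im, zero_add, zero_sub]
  rcases h with h | h
  · left
    have : w.re ^ 2 + w.im ^ 2 < 1 := by
      rw [← sq_lt_one_iff₀ (norm_nonneg w), ← normSq_eq_norm_sq, normSq_apply] at h
      nlinarith
    rw [← add_div]
    exact div_pos (by nlinarith) hn
  · right
    rw [← sub_div, div_ne_zero_iff]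
    exact ⟨by contrapose! h; linarith, hn.ne'⟩

lemma analyticAt_artanh {w : ℂ} (h : ‖w‖ < 1 ∨ w.im ≠ 0) : AnalyticAt ℂ artanh w := by
  have hw := one_sub_ne_zero_of_norm_lt_one_or_im_ne_zero h
  have hslit := one_add_div_one_sub_mem_slitPlane h
  unfold artanh
  fun_prop (disch := assumption)

lemma mul_log_add_add_mul_log_sub {z τ : ℂ} (h : ‖τ‖ < z.im) :
    (z + τ) / 2 * log (z + τ) + (z - τ) / 2 * log (z - τ) =
      z * log z + z / 2 * log (1 - τ ^ 2 / z ^ 2)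
        + τ ^ 2 / z * artanhSeries.sum (τ ^ 2 / z ^ 2) := by
  have hz : 0 < z.im := (norm_nonneg τ).trans_lt h
  have hz0 : z ≠ 0 := fun h => by simp [h] at hz
  set u := τ / z with hu
  have hu1 : ‖u‖ < 1 := by
    rw [hu, norm_div, div_lt_one (norm_pos_iff.2 hz0)]
    exact h.trans_le ((le_abs_self _).trans (abs_im_le_norm z))
  have hre := abs_lt.1 ((abs_re_le_norm u).trans_lt hu1)
  have him := abs_lt.1 ((abs_im_le_norm τ).trans_lt h)
  have hadd : 0 < (1 + u).re := by simp only [add_re, one_re]; linarith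
  have hsub : 0 < (1 - u).re := by simp only [sub_re, one_re]; linarith
  have hzadd : z + τ = z * (1 + u) := by rw [hu]; field_simp
  have hzsub : z - τ = z * (1 - u) := by rw [hu]; field_simp
  have l1 : log (z + τ) = log z + log (1 + u) := by
    rw [hzadd]; exact log_mul_of_im_pos hz hadd (by rw [← hzadd, add_im]; linarith)
  have l2 : log (z - τ) = log z + log (1 - u) := by
    rw [hzsub]; exact log_mul_of_im_pos hz hsub (by rw [← hzsub, sub_im]; linarith)
  have l3 : log (1 - τ ^ 2 / z ^ 2) = log (1 + u) + log (1 - u) := by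
    rw [← log_mul_of_re_pos hadd hsub, hu]; ring_nf
  have l4 := log_div_of_re_pos hadd hsub
  have l5 : 1 / 2 * log ((1 + u) / (1 - u)) = u * artanhSeries.sum (τ ^ 2 / z ^ 2) := by
    rw [← artanh, artanh_eq_mul_artanhSeries_sum hu1, hu, div_pow]
  rw [hu] at l4 l5
  linear_combination ((z + τ) / 2) * l1 + ((z - τ) / 2) * l2 - (z / 2) * l3 - (τ / 2) * l4
    + τ * l5

lemma ofReal_sq_div_four_sub_one (μ : ℝ) :
    (μ : ℂ) ^ 2 / 4 - 1 = ((μ ^ 2 / 4 - 1 : ℝ) : ℂ) := by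
  push_cast; ring

lemma T_sq (μ : ℝ) : T μ ^ 2 = (μ : ℂ) ^ 2 / 4 - 1 := by
  rw [T, show (1 : ℂ) / 2 = ((2 : ℕ) : ℂ)⁻¹ by norm_num]
  exact cpow_nat_inv_pow _ two_ne_zero

lemma norm_T_sq (μ : ℝ) : ‖T μ‖ ^ 2 = |μ ^ 2 / 4 - 1| := by
  rw [← norm_pow, T_sq, ofReal_sq_div_four_sub_one, norm_real, Real.norm_eq_abs]

lemma abs_im_T (μ : ℝ) : |(T μ).im| = √((|μ ^ 2 / 4 - 1| - (μ ^ 2 / 4 - 1)) / 2) := by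
  rw [T, one_div, abs_cpow_inv_two_im, ofReal_sq_div_four_sub_one, norm_real, Real.norm_eq_abs,
    ofReal_re]

lemma abs_im_T_lt_one {μ : ℝ} (hμ : μ ≠ 0) : |(T μ).im| < 1 := by
  have := pow_pos (abs_pos.2 hμ) 2
  rw [abs_im_T, Real.sqrt_lt' one_pos]
  rcases abs_cases (μ ^ 2 / 4 - 1) with ⟨h, -⟩ | ⟨h, -⟩ <;> rw [h] <;> nlinarith [sq_abs μ]

lemma im_T_ne_zero {μ : ℝ} (h : μ ^ 2 < 4) : (T μ).im ≠ 0 := by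
  rw [← abs_pos, abs_im_T, abs_of_neg (by linarith), Real.sqrt_pos]
  linarith

lemma norm_two_mul_T_div_lt_one {μ : ℝ} (h : 2 ≤ μ) : ‖2 * T μ / μ‖ < 1 := by
  have hμ : 0 < μ := by linarith
  have hsq : ‖T μ‖ ^ 2 < (μ / 2) ^ 2 := by
    rw [norm_T_sq, abs_of_nonneg (by nlinarith)]; linarith
  have := lt_of_pow_lt_pow_left₀ 2 (by linarith) hsq
  rw [norm_div, norm_mul, norm_real, Real.norm_of_nonneg hμ.le, div_lt_one hμ, Complex.norm_two]
  linarith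

lemma T_eq_I_mul {μ : ℝ} (h : μ ^ 2 ≤ 4) :
    T μ = I * (1 - (μ : ℂ) ^ 2 / 4) ^ ((1 : ℂ) / 2) := by
  rw [T, ofReal_sq_div_four_sub_one, ofReal_cpow_of_nonpos (by linarith),
    show (Real.pi : ℂ) * I * (1 / 2) = Real.pi / 2 * I by ring, exp_pi_div_two_mul_I, mul_comm]
  push_cast
  ring_nf

lemma tendsto_T_two : Tendsto T (𝓝 2) (𝓝 0) := by
  rw [tendsto_zero_iff_norm_tendsto_zero]
  have hnorm : (fun μ => ‖T μ‖) = fun μ => √|μ ^ 2 / 4 - 1| :=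
    funext fun μ => by rw [← norm_T_sq, Real.sqrt_sq (norm_nonneg _)]
  rw [hnorm]
  convert (by fun_prop : Continuous fun μ : ℝ => √|μ ^ 2 / 4 - 1|).tendsto 2 using 2
  norm_num

@[fun_prop]
lemma analyticAt_ofReal {x : ℝ} : AnalyticAt ℝ ((↑) : ℝ → ℂ) x := ofRealCLM.analyticAt x

lemma AnalyticAt.comp_ofReal {G : ℂ → ℂ} {x : ℝ} (hG : AnalyticAt ℂ G x) :
    AnalyticAt ℝ (fun y : ℝ => G y) x :=
  hG.restrictScalars.comp analyticAt_ofReal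

section RealDomain

variable {E : Type*} [NormedAddCommGroup E] [NormedSpace ℝ E] {g : E → ℂ} {x : E}

@[fun_prop]
lemma AnalyticAt.clog_real (hg : AnalyticAt ℝ g x) (m : g x ∈ slitPlane) :
    AnalyticAt ℝ (fun y => Complex.log (g y)) x :=
  (analyticAt_clog m).restrictScalars.comp hg

@[fun_prop]
lemma AnalyticAt.artanh_real (hg : AnalyticAt ℝ g x) (h : ‖g x‖ < 1 ∨ (g x).im ≠ 0) :
    AnalyticAt ℝ (fun y => artanh (g y)) x :=
  (analyticAt_artanh h).restrictScalars.comp hg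

@[fun_prop]
lemma AnalyticAt.artanhSeries_sum_real (hg : AnalyticAt ℝ g x) (h : ‖g x‖ < 1) :
    AnalyticAt ℝ (fun y => artanhSeries.sum (g y)) x :=
  (analyticAt_artanhSeries_sum h).restrictScalars.comp hg

end RealDomain

lemma analyticAt_T {μ₀ : ℝ} (h : μ₀ ^ 2 ≠ 4) : AnalyticAt ℝ T μ₀ := by
  rcases h.lt_or_gt with h | h
  · have hslit : 1 - (μ₀ : ℂ) ^ 2 / 4 ∈ slitPlane := by
      rw [show 1 - (μ₀ : ℂ) ^ 2 / 4 = ((1 - μ₀ ^ 2 / 4 : ℝ) : ℂ) by push_cast; ring,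
        ofReal_mem_slitPlane]
      linarith
    have hG : AnalyticAt ℂ (fun w : ℂ => I * (1 - w ^ 2 / 4) ^ ((1 : ℂ) / 2)) μ₀ := by
      fun_prop (disch := exact hslit)
    refine hG.comp_ofReal.congr ?_
    filter_upwards [((continuous_pow 2).tendsto μ₀).eventually_lt_const h] with μ hμ
    exact (T_eq_I_mul hμ.le).symm
  · have hslit : (μ₀ : ℂ) ^ 2 / 4 - 1 ∈ slitPlane := by
      rw [ofReal_sq_div_four_sub_one, ofReal_mem_slitPlane]
      linarith
    have hG : AnalyticAt ℂ (fun w : ℂ => (w ^ 2 / 4 - 1) ^ ((1 : ℂ) / 2)) μ₀ := by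
      fun_prop (disch := exact hslit)
    exact hG.comp_ofReal

lemma ofReal_div_two_sub_mem_slitPlane (μ : ℝ) {z : ℂ} (hz : z.im ≠ 0) :
    (μ : ℂ) / 2 - z ∈ slitPlane :=
  mem_slitPlane_iff.2 (Or.inr (by
    rw [sub_im, div_ofNat_im, ofReal_im, zero_div, zero_sub]; exact neg_ne_zero.2 hz))

lemma analyticAt_f_of_analyticAt_T {z : ℂ} (hz : 1 < z.im) (x t : ℝ) {μ₀ : ℝ} (hμ₀ : 0 < μ₀)
    (hT : AnalyticAt ℝ T μ₀) : AnalyticAt ℝ (fun μ => f z μ x t) μ₀ := by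
  have hμ : (μ₀ : ℂ) ≠ 0 := ofReal_ne_zero.2 hμ₀.ne'
  have him := abs_lt.1 (abs_im_T_lt_one hμ₀.ne')
  have h₁ := ofReal_div_two_sub_mem_slitPlane μ₀ (zero_lt_one.trans hz).ne'
  have h₂ : z + T μ₀ ∈ slitPlane := mem_slitPlane_iff.2 (Or.inr (by rw [add_im]; linarith))
  have h₃ : z - T μ₀ ∈ slitPlane := mem_slitPlane_iff.2 (Or.inr (by rw [sub_im]; linarith))
  have h₄ : ‖2 * T μ₀ / μ₀‖ < 1 ∨ (2 * T μ₀ / μ₀).im ≠ 0 := by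
    rcases le_or_gt 2 μ₀ with h | h
    · exact Or.inl (norm_two_mul_T_div_lt_one h)
    · refine Or.inr ?_
      simpa [hμ₀.ne'] using im_T_ne_zero (μ := μ₀) (by nlinarith)
  unfold f
  fun_prop (disch := assumption)

lemma analyticAt_f_two {z : ℂ} (hz : 1 < z.im) (x t : ℝ) :
    AnalyticAt ℝ (fun μ => f z μ x t) 2 := by
  have hslit := ofReal_div_two_sub_mem_slitPlane 2 (zero_lt_one.trans hz).ne'
  have hmodel : AnalyticAt ℝ (fun μ : ℝ =>
      ((μ : ℂ) / 2 - z) * (Real.pi * I / 2 + log ((μ : ℂ) / 2 - z))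
        + (z * log z + z / 2 * log (1 - ((μ : ℂ) ^ 2 / 4 - 1) / z ^ 2)
          + ((μ : ℂ) ^ 2 / 4 - 1) / z * artanhSeries.sum (((μ : ℂ) ^ 2 / 4 - 1) / z ^ 2))
        - 2 * ((μ : ℂ) ^ 2 / 4 - 1) / μ * artanhSeries.sum (4 * ((μ : ℂ) ^ 2 / 4 - 1) / μ ^ 2)
        - x * z - 2 * t * z ^ 2 + (μ : ℂ) / 2 * log 2) 2 := by
    fun_prop (disch := first | assumption | norm_num)
  have hT : ∀ᶠ μ in 𝓝 2, ‖T μ‖ < z.im :=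
    tendsto_T_two.norm.eventually_lt_const (by rw [norm_zero]; linarith)
  have hw : ∀ᶠ μ in 𝓝 (2 : ℝ), ‖2 * T μ / μ‖ < 1 :=
    ((tendsto_T_two.const_mul 2).div (continuous_ofReal.tendsto 2)
      (by norm_num)).norm.eventually_lt_const (by simp)
  refine hmodel.congr ?_
  filter_upwards [hT, hw] with μ hTμ hwμ
  have hlog := mul_log_add_add_mul_log_sub hTμ
  have hartanh := artanh_eq_mul_artanhSeries_sum hwμ
  rw [T_sq] at hlog
  rw [show (2 * T μ / μ) ^ 2 = 4 * ((μ : ℂ) ^ 2 / 4 - 1) / μ ^ 2 by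
    rw [div_pow, mul_pow, T_sq]; norm_num] at hartanh
  rw [f]
  linear_combination -hlog + T μ * hartanh
    + (2 * artanhSeries.sum (4 * ((μ : ℂ) ^ 2 / 4 - 1) / μ ^ 2) / μ) * T_sq μ

/-- For `Im z > 1` and all real `x`, `t`, the map `μ ↦ f(z,μ,x,t)` is real-analytic
on `(0,∞)`. -/
theorem f_analyticOnNhd_mu (z : ℂ) (hz : 1 < z.im) (x t : ℝ) :
    AnalyticOnNhd ℝ (fun μ : ℝ => f z μ x t) (Set.Ioi (0 : ℝ)) := by
  intro μ₀ (hμ₀ : 0 < μ₀)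
  rcases eq_or_ne μ₀ 2 with rfl | h
  · exact analyticAt_f_two hz x t
  · refine analyticAt_f_of_analyticAt_T hz x t hμ₀ (analyticAt_T fun hsq => h ?_)
    nlinarith
end

section
/- Let z ∈ ℂ with Im z > 0 and let T ∈ ℂ with |T| < Im z. Then ((z+T)/2)·log(z+T) + ((z−T)/2)·log(z−T) = z·log z + Σ_{k=1}^∞ T^{2k} / (2k·(2k−1)·z^{2k−1}), where the series on the right converges (absolutely). In particular the left-hand side, as a function of T, has a convergent power-series expansion containing only even powers of T. -/
/-!
Put `w = T / z`, so `‖w‖ < 1`. Since `z ± T = z (1 ± w)` with `Re (1 ± w) > 0` and both `z` and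
`z ± T` in the upper half-plane, `log (z ± T) = log z + log (1 ± w)`, and the left-hand side minus
`z log z` becomes `(z / 2) ((1 + w) log (1 + w) + (1 - w) log (1 - w))`. Multiplying the Taylor
series of `-log (1 - u)` by `1 - u` gives `(1 - u) log (1 - u) + u = ∑ u^(n+2) / ((n+2)(n+1))`;
adding this at `u = w` and `u = -w` cancels the odd powers.
-/

open Complex

namespace Complex

theorem log_mul_of_im_pos_of_re_pos {a b : ℂ} (ha : 0 < a.im) (hb : 0 < b.re)
    (hab : 0 ≤ (a * b).im) : log (a * b) = log a + log b := by
  have ha₀ : a ≠ 0 := fun h => by simp [h] at ha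
  have hb₀ : b ≠ 0 := fun h => by simp [h] at hb
  have ha_arg : 0 ≤ arg a := arg_nonneg_iff.mpr ha.le
  have hb_arg := abs_lt.mp (abs_arg_lt_pi_div_two_iff.mpr (Or.inl hb))
  rw [log_mul_eq_add_log_iff ha₀ hb₀]
  refine ⟨by linarith [Real.pi_pos], not_lt.mp fun hgt => ?_⟩
  -- past `π` the sum of the arguments wraps around to a negative `arg (a * b)`
  have hwrap : arg (a * b) = arg a + arg b - 2 * Real.pi := by
    rw [← arg_coe_angle_toReal_eq_arg, arg_mul_coe_angle ha₀ hb₀, ← Real.Angle.coe_add,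
      Real.Angle.toReal_coe_eq_self_sub_two_pi_iff]
    exact ⟨hgt, by linarith [arg_le_pi a, Real.pi_pos]⟩
  linarith [arg_nonneg_iff.mpr hab, arg_le_pi a]

theorem norm_div_lt_one_of_norm_lt_im {z u : ℂ} (hu : ‖u‖ < z.im) : ‖u / z‖ < 1 := by
  have hz : 0 < ‖z‖ := (norm_nonneg u).trans_lt (hu.trans_le (im_le_norm z))
  rw [norm_div, div_lt_one hz]
  exact hu.trans_le (im_le_norm z)

theorem log_add_eq_log_add_log_one_add_div {z u : ℂ} (hu : ‖u‖ < z.im) :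
    log (z + u) = log z + log (1 + u / z) := by
  have hz : 0 < z.im := (norm_nonneg u).trans_lt hu
  have hzu : z * (1 + u / z) = z + u := by
    field_simp [show z ≠ 0 from fun h => by simp [h] at hz]
  have hnorm := norm_div_lt_one_of_norm_lt_im hu
  rw [← hzu]
  refine log_mul_of_im_pos_of_re_pos hz ?_ ?_
  · have := (abs_le.mp (abs_re_le_norm (u / z))).1
    simp only [add_re, one_re]
    linarith
  · have := (abs_le.mp (abs_im_le_norm u)).1
    rw [hzu, add_im]
    linarith

theorem hasSum_one_sub_mul_log_one_sub_add {u : ℂ} (hu : ‖u‖ < 1) :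
    HasSum (fun n : ℕ => u ^ (n + 2) / ((n + 2) * (n + 1))) ((1 - u) * log (1 - u) + u) := by
  have hlog₁ := hasSum_taylorSeries_neg_log' hu
  have hlog₂ : HasSum (fun n : ℕ => u ^ (n + 2) / (n + 2)) (-log (1 - u) - u) := by
    have h := (hasSum_nat_add_iff' 1).mpr hlog₁
    norm_num [add_assoc, one_add_one_eq_two] at h
    exact h
  have h := ((hlog₁.mul_left u).sub hlog₂).congr_fun
    (g := fun n : ℕ => u ^ (n + 2) / ((n + 2) * (n + 1))) fun n => by
      have h₁ : (n : ℂ) + 1 ≠ 0 := Nat.cast_add_one_ne_zero n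
      have h₂ : (n : ℂ) + 2 ≠ 0 := by exact_mod_cast (n + 1).succ_ne_zero
      field_simp
      ring
  rwa [show u * -log (1 - u) - (-log (1 - u) - u) = (1 - u) * log (1 - u) + u by ring] at h

theorem hasSum_one_add_mul_log_add_one_sub_mul_log {w : ℂ} (hw : ‖w‖ < 1) :
    HasSum (fun k : ℕ => 2 * w ^ (2 * k + 2) / (((2 * k + 2 : ℕ) : ℂ) * ((2 * k + 1 : ℕ) : ℂ)))
      ((1 + w) * log (1 + w) + (1 - w) * log (1 - w)) := by
  have h := (hasSum_one_sub_mul_log_one_sub_add hw).add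
    (hasSum_one_sub_mul_log_one_sub_add (u := -w) (by rwa [norm_neg]))
  rw [sub_neg_eq_add, add_comm, add_add_add_comm, neg_add_cancel, add_zero] at h
  have hodd : ∀ n ∉ Set.range fun k : ℕ => 2 * k, w ^ (n + 2) / ((n + 2) * (n + 1))
      + (-w) ^ (n + 2) / ((n + 2) * (n + 1)) = 0 := by
    intro n hn
    have : Odd n := Nat.not_even_iff_odd.mp fun ⟨k, hk⟩ => hn ⟨k, by simp [hk, two_mul]⟩
    rw [neg_pow, (this.add_even even_two).neg_one_pow]
    ring
  have hinj : Function.Injective fun k : ℕ => 2 * k := mul_right_injective₀ two_ne_zero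
  refine ((hinj.hasSum_iff hodd).mpr h).congr_fun fun k => ?_
  simp only [Function.comp_apply, neg_pow w, ((even_two_mul k).add even_two).neg_one_pow]
  push_cast
  ring

theorem summable_norm_one_add_mul_log_add_one_sub_mul_log_series {w : ℂ} (hw : ‖w‖ < 1) :
    Summable fun k : ℕ =>
      ‖2 * w ^ (2 * k + 2) / (((2 * k + 2 : ℕ) : ℂ) * ((2 * k + 1 : ℕ) : ℂ))‖ := by
  refine (summable_geometric_of_lt_one (norm_nonneg w) hw).of_nonneg_of_le
    (fun _ => norm_nonneg _) fun k => ?_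
  have hden : (2 : ℝ) ≤ ((2 * k + 2 : ℕ) : ℝ) * ((2 * k + 1 : ℕ) : ℝ) := by
    push_cast
    nlinarith
  rw [norm_div, norm_mul, norm_mul, norm_pow, Complex.norm_two, norm_natCast, norm_natCast]
  calc 2 * ‖w‖ ^ (2 * k + 2) / (((2 * k + 2 : ℕ) : ℝ) * ((2 * k + 1 : ℕ) : ℝ))
      ≤ ‖w‖ ^ (2 * k + 2) := by
        rw [div_le_iff₀ (by positivity)]
        nlinarith [pow_nonneg (norm_nonneg w) (2 * k + 2)]
    _ ≤ ‖w‖ ^ k := pow_le_pow_of_le_one (norm_nonneg w) hw.le (by omega)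

end Complex

theorem log_sum_even_powers_general (z T : ℂ) (hT : ‖T‖ < z.im) :
    Summable (fun k : ℕ =>
        ‖T ^ (2*k+2) / (((2*k+2 : ℕ) : ℂ) * ((2*k+1 : ℕ) : ℂ) * z ^ (2*k+1))‖) ∧
      HasSum (fun k : ℕ =>
          T ^ (2*k+2) / (((2*k+2 : ℕ) : ℂ) * ((2*k+1 : ℕ) : ℂ) * z ^ (2*k+1)))
        (((z + T)/2) * Complex.log (z + T) + ((z - T)/2) * Complex.log (z - T)
          - z * Complex.log z) := by
  have hz₀ : z ≠ 0 := fun h => by simpa [h] using (norm_nonneg T).trans_lt hT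
  have hw := norm_div_lt_one_of_norm_lt_im hT
  have hterm (k : ℕ) : T ^ (2*k+2) / (((2*k+2 : ℕ) : ℂ) * ((2*k+1 : ℕ) : ℂ) * z ^ (2*k+1)) =
      z / 2 * (2 * (T / z) ^ (2 * k + 2) / (((2 * k + 2 : ℕ) : ℂ) * ((2 * k + 1 : ℕ) : ℂ))) := by
    have h₁ : ((2 * k + 1 : ℕ) : ℂ) ≠ 0 := Nat.cast_ne_zero.mpr (by omega)
    have h₂ : ((2 * k + 2 : ℕ) : ℂ) ≠ 0 := Nat.cast_ne_zero.mpr (by omega)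
    rw [div_pow, pow_succ z (2 * k + 1)]
    field_simp
  have hsplit : ((z + T)/2) * log (z + T) + ((z - T)/2) * log (z - T) - z * log z =
      z / 2 * ((1 + T / z) * log (1 + T / z) + (1 - T / z) * log (1 - T / z)) := by
    rw [sub_eq_add_neg z T, log_add_eq_log_add_log_one_add_div hT,
      log_add_eq_log_add_log_one_add_div (u := -T) (by rwa [norm_neg]), neg_div,
      ← sub_eq_add_neg z T, ← sub_eq_add_neg 1 (T / z)]
    linear_combination (log (1 - T / z) - log (1 + T / z)) / 2 * mul_div_cancel₀ T hz₀
  simp_rw [hterm, hsplit, norm_mul]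
  exact ⟨(summable_norm_one_add_mul_log_add_one_sub_mul_log_series hw).mul_left _,
    (hasSum_one_add_mul_log_add_one_sub_mul_log hw).mul_left _⟩

/-- For `Im z > 0` and `|T| < Im z`, one has
`((z+T)/2)·log(z+T) + ((z−T)/2)·log(z−T) = z·log z + Σ_{k≥1} T^{2k}/(2k(2k−1) z^{2k−1})`,
the series converging absolutely.  Here the series is indexed by `k : ℕ` via
`k ↦ T^(2k+2)/((2k+2)(2k+1) z^(2k+1))`. -/
theorem log_sum_even_powers (z T : ℂ) (hz : 0 < z.im) (hT : ‖T‖ < z.im) :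
    Summable (fun k : ℕ =>
        ‖T ^ (2*k+2) / (((2*k+2 : ℕ) : ℂ) * ((2*k+1 : ℕ) : ℂ) * z ^ (2*k+1))‖) ∧
      HasSum (fun k : ℕ =>
          T ^ (2*k+2) / (((2*k+2 : ℕ) : ℂ) * ((2*k+1 : ℕ) : ℂ) * z ^ (2*k+1)))
        (((z + T)/2) * Complex.log (z + T) + ((z - T)/2) * Complex.log (z - T)
          - z * Complex.log z) :=
  log_sum_even_powers_general z T hT
end

section
/- For every z ∈ ℂ with Im z > 1, the function μ ↦ ((z+T(μ))/2)·log(z+T(μ)) + ((z−T(μ))/2)·log(z−T(μ)) is real-analytic on the open interval (0,∞); in particular it is analytic at μ = 2, even though T(μ) is not differentiable there. -/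
/-!
`T(μ)` is a square root of `q(μ) = μ²/4 − 1`, a polynomial in `μ`, and the map
`h(t) = ((z+t)/2)·log(z+t) + ((z−t)/2)·log(z−t)` is even, so the function equals `H(q(μ))`
with `H(w) = h(√w)`, which does not depend on the choice of square root. Near `w ≠ 0` some
square root is holomorphic, so `H` is holomorphic on a punctured disc around `0`; it is
continuous at `0`, hence holomorphic there by the removable singularity theorem.
-/

open Complex

open Metric

section EvenCpowHalf

lemma Complex.cpow_half_sq (w : ℂ) : (w ^ ((1 : ℂ) / 2)) ^ 2 = w := by
  simp [cpow_ofNat_inv_pow]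

lemma Complex.norm_cpow_half (w : ℂ) : ‖w ^ ((1 : ℂ) / 2)‖ = √‖w‖ := by
  rw [Real.sqrt_eq_rpow, ← norm_cpow_real]
  norm_num

lemma Function.Even.comp_cpow_half_eq {β : Type*} {f : ℂ → β} (hf : f.Even) (w : ℂ) :
    f (w ^ ((1 : ℂ) / 2)) = f (I * (-w) ^ ((1 : ℂ) / 2)) := by
  have hsq : w ^ ((1 : ℂ) / 2) * w ^ ((1 : ℂ) / 2) =
      (I * (-w) ^ ((1 : ℂ) / 2)) * (I * (-w) ^ ((1 : ℂ) / 2)) := by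
    simp only [← sq, mul_pow, I_sq, cpow_half_sq]
    ring
  rcases mul_self_eq_mul_self_iff.1 hsq with h | h <;> rw [h]
  exact hf _

variable {E : Type*} [NormedAddCommGroup E] [NormedSpace ℂ E] {f : ℂ → E}

lemma Function.Even.differentiableAt_comp_cpow_half (hf : f.Even) {r : ℝ}
    (hd : DifferentiableOn ℂ f (ball 0 (√r))) {w : ℂ} (hw : w ∈ ball 0 r) (hw₀ : w ≠ 0) :
    DifferentiableAt ℂ (fun v ↦ f (v ^ ((1 : ℂ) / 2))) w := by
  have hdiff {g : ℂ → ℂ} (hg : DifferentiableAt ℂ g w) (hgw : ‖g w‖ = √‖w‖) :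
      DifferentiableAt ℂ (fun v ↦ f (g v)) w := by
    refine (hd.differentiableAt (isOpen_ball.mem_nhds ?_)).comp w hg
    rw [mem_ball_zero_iff, hgw]
    exact Real.sqrt_lt_sqrt (norm_nonneg w) (mem_ball_zero_iff.1 hw)
  rcases mem_slitPlane_or_neg_mem_slitPlane hw₀ with hslit | hslit
  · exact hdiff (differentiableAt_id.cpow_const hslit) (norm_cpow_half w)
  · simp only [hf.comp_cpow_half_eq]
    refine hdiff ((differentiableAt_neg_iff.2 differentiableAt_id).cpow_const hslit
      |>.const_mul I) ?_
    rw [norm_mul, norm_I, one_mul, norm_cpow_half, norm_neg]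

theorem Function.Even.analyticOnNhd_comp_cpow_half [CompleteSpace E] (hf : f.Even) {r : ℝ}
    (hd : DifferentiableOn ℂ f (ball 0 (√r))) :
    AnalyticOnNhd ℂ (fun w ↦ f (w ^ ((1 : ℂ) / 2))) (ball 0 r) := by
  rcases le_or_gt r 0 with hr | hr
  · simp [ball_eq_empty.2 hr]
  refine DifferentiableOn.analyticOnNhd ?_ isOpen_ball
  refine (differentiableOn_compl_singleton_and_continuousAt_iff (ball_mem_nhds 0 hr)).1
    ⟨fun w hw ↦ (hf.differentiableAt_comp_cpow_half hd hw.1 hw.2).differentiableWithinAt, ?_⟩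
  have hf₀ : ContinuousAt f ((0 : ℂ) ^ ((1 : ℂ) / 2)) := by
    rw [zero_cpow (by norm_num)]
    exact (hd.differentiableAt (ball_mem_nhds 0 (Real.sqrt_pos.2 hr))).continuousAt
  exact hf₀.comp (f := fun w : ℂ ↦ w ^ ((1 : ℂ) / 2))
    (continuousAt_cpow_const_of_re_pos (Or.inl le_rfl) (by norm_num))

end EvenCpowHalf

section LogPair

noncomputable def logPair (z t : ℂ) : ℂ :=
  ((z + t) / 2) * log (z + t) + ((z - t) / 2) * log (z - t)

lemma logPair_even (z : ℂ) : (logPair z).Even := fun t ↦ by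
  simp only [logPair, ← sub_eq_add_neg, sub_neg_eq_add]
  exact add_comm _ _

variable {z : ℂ}

lemma analyticAt_logPair {t : ℂ} (hadd : z + t ∈ slitPlane) (hsub : z - t ∈ slitPlane) :
    AnalyticAt ℂ (logPair z) t := by
  have aadd : AnalyticAt ℂ (fun t : ℂ ↦ z + t) t := analyticAt_const.add analyticAt_id
  have asub : AnalyticAt ℂ (fun t : ℂ ↦ z - t) t := analyticAt_const.sub analyticAt_id
  exact (aadd.div_const.mul (aadd.clog hadd)).add (asub.div_const.mul (asub.clog hsub))

lemma differentiableOn_logPair_ball : DifferentiableOn ℂ (logPair z) (ball 0 z.im) := by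
  intro t ht
  have him := abs_lt.1 ((abs_im_le_norm t).trans_lt (mem_ball_zero_iff.1 ht))
  refine (analyticAt_logPair ?_ ?_).differentiableAt.differentiableWithinAt <;>
    refine mem_slitPlane_iff.2 (Or.inr (ne_of_gt ?_))
  · rw [add_im]; linarith
  · rw [sub_im]; linarith

lemma analyticOnNhd_logPair_cpow_half (hz : 0 ≤ z.im) :
    AnalyticOnNhd ℂ (fun w ↦ logPair z (w ^ ((1 : ℂ) / 2))) (ball 0 (z.im ^ 2)) :=
  (logPair_even z).analyticOnNhd_comp_cpow_half <| by
    rw [Real.sqrt_sq hz]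
    exact differentiableOn_logPair_ball

lemma analyticAt_logPair_cpow_half_of_pos (hz : 0 < z.im) {x : ℝ} (hx : 0 < x) :
    AnalyticAt ℂ (fun w ↦ logPair z (w ^ ((1 : ℂ) / 2))) x := by
  have hsqrt : (x : ℂ) ^ ((1 : ℂ) / 2) = ((x ^ (1 / 2 : ℝ) : ℝ) : ℂ) := by
    rw [ofReal_cpow hx.le]; norm_num
  have hlog : AnalyticAt ℂ (logPair z) ((x : ℂ) ^ ((1 : ℂ) / 2)) := by
    refine analyticAt_logPair ?_ ?_ <;> refine mem_slitPlane_iff.2 (Or.inr (ne_of_gt ?_))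
    · rwa [hsqrt, add_im, ofReal_im, add_zero]
    · rwa [hsqrt, sub_im, ofReal_im, sub_zero]
  exact hlog.comp (f := fun w : ℂ ↦ w ^ ((1 : ℂ) / 2))
    (analyticAt_id.cpow analyticAt_const (ofReal_mem_slitPlane.2 hx))

end LogPair

/-- For `Im z > 1`, the map
`μ ↦ ((z+T(μ))/2)·log(z+T(μ)) + ((z−T(μ))/2)·log(z−T(μ))`
is real-analytic on `(0,∞)`. -/
theorem log_pair_analyticOnNhd (z : ℂ) (hz : 1 < z.im) :
    AnalyticOnNhd ℝ
      (fun μ : ℝ =>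
        ((z + T μ)/2) * Complex.log (z + T μ) + ((z - T μ)/2) * Complex.log (z - T μ))
      (Set.Ioi (0 : ℝ)) := by
  intro μ hμ
  have hq : AnalyticAt ℝ (fun μ : ℝ ↦ (μ : ℂ) ^ 2 / 4 - 1) μ := by
    have hofReal : AnalyticAt ℝ (fun μ : ℝ ↦ (μ : ℂ)) μ := ofRealCLM.analyticAt μ
    fun_prop
  have hcast : (μ : ℂ) ^ 2 / 4 - 1 = ((μ ^ 2 / 4 - 1 : ℝ) : ℂ) := by push_cast; ring
  have hH : AnalyticAt ℂ (fun w ↦ logPair z (w ^ ((1 : ℂ) / 2))) ((μ : ℂ) ^ 2 / 4 - 1) := by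
    rw [hcast]
    rcases lt_or_ge (μ ^ 2 / 4 - 1) 1 with hsmall | hlarge
    · refine analyticOnNhd_logPair_cpow_half (by linarith) _ ?_
      rw [mem_ball_zero_iff, norm_real, Real.norm_eq_abs, abs_lt]
      constructor <;> nlinarith [Set.mem_Ioi.1 hμ]
    · exact analyticAt_logPair_cpow_half_of_pos (by linarith) (by linarith)
  exact hH.restrictScalars.comp (f := fun μ : ℝ ↦ (μ : ℂ) ^ 2 / 4 - 1) hq
end

section
/- Fix z ∈ ℂ with Im z > 0. Then, as μ → 2 from the right (so that T = T(μ) = √(μ²/4 − 1) → 0 through positive reals), the expression (1/2)·log(μ/2 − z) + (μ/(8T))·[ log(z+T) − log(z−T) − 2·artanh(2T/μ) ] converges to (1/2)·log(1 − z) + 1/(2z) − 1/2. In particular, μ = 2 is a removable singularity of the μ-derivative of the NLS phase function f(z,μ,x,t). -/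
/-!
After dividing by `T`, the bracket consists of two difference quotients that `T → 0` (through
nonzero values, as `μ → 2⁺`) turns into derivatives: `(log (z + T) - log (z - T)) / T` is a
symmetric difference quotient of `log` at `z`, tending to `2 / z`, and
`artanh (2T/μ) / (2T/μ)` tends to `artanh' 0 = 1`. Hence the expression tends to
`(1/2) log (1 - z) + (2/8) (2/z) - 1/2`.
-/

open Complex Filter Topology

theorem HasDerivAt.tendsto_symmetric_slope_zero {𝕜 F : Type*} [NontriviallyNormedField 𝕜]
    [NormedAddCommGroup F] [NormedSpace 𝕜 F] {f : 𝕜 → F} {f' : F} {x : 𝕜}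
    (hf : HasDerivAt f f' x) :
    Tendsto (fun t ↦ t⁻¹ • (f (x + t) - f (x - t))) (𝓝[≠] 0) (𝓝 ((2 : 𝕜) • f')) := by
  have hneg : Tendsto (fun t : 𝕜 ↦ -t) (𝓝[≠] 0) (𝓝[≠] 0) :=
    tendsto_nhdsWithin_iff.2 ⟨(continuous_neg.tendsto' 0 0 neg_zero).mono_left nhdsWithin_le_nhds,
      eventually_nhdsWithin_of_forall fun t ht ↦ neg_ne_zero.2 ht⟩
  rw [two_smul]
  refine (hf.tendsto_slope_zero.add (hf.tendsto_slope_zero.comp hneg)).congr fun t ↦ ?_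
  simp only [Function.comp_apply, inv_neg, neg_smul, ← sub_eq_add_neg, ← smul_sub]
  congr 1
  abel

theorem hasDerivAt_artanh {w : ℂ} (hw : (1 + w) / (1 - w) ∈ slitPlane) :
    HasDerivAt artanh (1 - w ^ 2)⁻¹ w := by
  have hw1 : 1 - w ≠ 0 := fun h ↦ by simp [h] at hw
  have hw2 : 1 + w ≠ 0 := fun h ↦ by simp [h] at hw
  have hquot : HasDerivAt (fun w : ℂ ↦ (1 + w) / (1 - w)) (2 / (1 - w) ^ 2) w := by
    refine (((hasDerivAt_id w).const_add 1).div ((hasDerivAt_id w).const_sub 1) hw1).congr_deriv ?_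
    simp only [id]
    ring
  have hw12 : 1 - w ^ 2 ≠ 0 := by
    rw [show 1 - w ^ 2 = (1 - w) * (1 + w) by ring]
    exact mul_ne_zero hw1 hw2
  refine ((hquot.clog hw).const_mul (1 / 2 : ℂ)).congr_deriv ?_
  field_simp
  ring

theorem T_eq_ofReal_sqrt {μ : ℝ} (hμ : 4 ≤ μ ^ 2) : T μ = (√(μ ^ 2 / 4 - 1) : ℝ) := by
  rw [T, Real.sqrt_eq_rpow, ofReal_cpow (by linarith)]
  push_cast
  ring_nf

theorem tendsto_T_nhdsGT_two : Tendsto T (𝓝[>] 2) (𝓝[≠] 0) := by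
  have hT : T =ᶠ[𝓝[>] 2] fun μ : ℝ ↦ ((√(μ ^ 2 / 4 - 1) : ℝ) : ℂ) :=
    eventually_nhdsWithin_of_forall fun μ (hμ : 2 < μ) ↦ T_eq_ofReal_sqrt (by nlinarith)
  refine tendsto_nhdsWithin_iff.2 ⟨?_, ?_⟩
  · refine Tendsto.congr' hT.symm (Tendsto.mono_left ?_ nhdsWithin_le_nhds)
    convert (by fun_prop : Continuous fun μ : ℝ ↦ ((√(μ ^ 2 / 4 - 1) : ℝ) : ℂ)).tendsto 2
    norm_num
  · filter_upwards [hT, self_mem_nhdsWithin] with μ hμ (h2 : 2 < μ)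
    rw [hμ, Set.mem_compl_singleton_iff, ofReal_ne_zero, Real.sqrt_ne_zero']
    nlinarith

theorem tendsto_ofReal_nhdsGT_two : Tendsto (fun μ : ℝ ↦ (μ : ℂ)) (𝓝[>] 2) (𝓝 2) :=
  (continuous_ofReal.tendsto' 2 2 (by norm_num)).mono_left nhdsWithin_le_nhds

theorem eventually_ofReal_ne_zero_nhdsGT_two : ∀ᶠ μ : ℝ in 𝓝[>] 2, (μ : ℂ) ≠ 0 :=
  eventually_nhdsWithin_of_forall fun μ (hμ : 2 < μ) ↦ ofReal_ne_zero.2 (by positivity)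

theorem tendsto_two_mul_T_div_nhdsGT_two :
    Tendsto (fun μ : ℝ ↦ 2 * T μ / μ) (𝓝[>] 2) (𝓝[≠] 0) := by
  refine tendsto_nhdsWithin_iff.2 ⟨?_, ?_⟩
  · have h := ((tendsto_T_nhdsGT_two.mono_right nhdsWithin_le_nhds).const_mul 2).div
      tendsto_ofReal_nhdsGT_two two_ne_zero
    rwa [mul_zero, zero_div] at h
  · filter_upwards [tendsto_T_nhdsGT_two self_mem_nhdsWithin,
      eventually_ofReal_ne_zero_nhdsGT_two] with μ h1 h2
    exact div_ne_zero (mul_ne_zero two_ne_zero h1) h2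

/-- For `Im z > 0`, as `μ → 2⁺`,
`(1/2)·log(μ/2 − z) + (μ/(8T))[log(z+T) − log(z−T) − 2 artanh(2T/μ)]`
converges to `(1/2)·log(1 − z) + 1/(2z) − 1/2`, where `T = T(μ)`. -/
theorem removable_singularity_at_two (z : ℂ) (hz : 0 < z.im) :
    Tendsto
      (fun μ : ℝ =>
        (1/2) * Complex.log ((μ : ℂ)/2 - z)
          + ((μ : ℂ) / (8 * T μ)) *
              (Complex.log (z + T μ) - Complex.log (z - T μ)
                - 2 * artanh (2 * T μ / (μ : ℂ))))
      (𝓝[>] (2 : ℝ))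
      (𝓝 ((1/2) * Complex.log (1 - z) + 1/(2*z) - 1/2)) := by
  have hT := tendsto_T_nhdsGT_two
  have hμ := tendsto_ofReal_nhdsGT_two
  have hfirst : Tendsto (fun μ : ℝ ↦ (1 / 2) * log (μ / 2 - z)) (𝓝[>] 2)
      (𝓝 ((1 / 2) * log (1 - z))) := by
    have h1z : 1 - z ∈ slitPlane := Or.inr (by simpa using hz.ne')
    refine ((continuousAt_clog h1z).tendsto.comp ?_).const_mul _
    simpa using (hμ.div_const 2).sub_const z
  have hlog := (hasDerivAt_log (Or.inr hz.ne')).tendsto_symmetric_slope_zero.comp hT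
  have hartanh := (hasDerivAt_artanh (w := 0) (by simp)).tendsto_slope_zero.comp
    tendsto_two_mul_T_div_nhdsGT_two
  have hlim := (hfirst.add ((hμ.div_const 8).mul hlog)).sub (hartanh.const_mul (1 / 2))
  have hval : (1 / 2) * log (1 - z) + 1 / (2 * z) - 1 / 2
      = (1 / 2) * log (1 - z) + 2 / 8 * ((2 : ℂ) • z⁻¹) - 1 / 2 * (1 - 0 ^ 2)⁻¹ := by
    simp only [smul_eq_mul]
    ring
  rw [hval]
  refine hlim.congr' ?_
  filter_upwards [hT self_mem_nhdsWithin, eventually_ofReal_ne_zero_nhdsGT_two] with μ h1 h2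
  have hartanh0 : artanh 0 = 0 := by simp [artanh]
  simp only [Function.comp_apply, smul_eq_mul, zero_add, hartanh0, sub_zero]
  field_simp
  ring
end

section
/- Let c, z₀ : ℝ → ℂ be differentiable at μ₀ ∈ ℝ, and let z₁, z₂ ∈ ℂ be such that z₁ − z₀(μ) ∉ (−∞,0] and z₂ − z₀(μ) ∉ (−∞,0] for all μ in a neighborhood of μ₀. Define, for μ near μ₀, I₁(μ) = ∫_{[z₁,z₀(μ)]} f(ξ,μ) dξ + ∫_{[z₀(μ),z₂]} f(ξ,μ) dξ, where f(ξ,μ) = c(μ)·(ξ − z₀(μ))·log(ξ − z₀(μ)). Then I₁ is differentiable at μ₀ and its derivative equals the contour integral of the μ-derivative of the integrand: I₁′(μ₀) = ∫_{[z₁,z₀(μ₀)]} g(ξ) dξ + ∫_{[z₀(μ₀),z₂]} g(ξ) dξ, where g(ξ) = c′(μ₀)·(ξ − z₀(μ₀))·log(ξ − z₀(μ₀)) − c(μ₀)·z₀′(μ₀)·( log(ξ − z₀(μ₀)) + 1 ). -/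
open Complex Filter Topology

/-- Contour integral of `g` along the oriented segment `[a,b]`:
`∫_{[a,b]} g(ξ) dξ = ∫₀¹ g(a + s(b−a))·(b−a) ds`. -/
noncomputable def segIntegral (a b : ℂ) (g : ℂ → ℂ) : ℂ :=
  ∫ s in (0:ℝ)..1, g (a + (s : ℂ) * (b - a)) * (b - a)

/-!
Let `F u = u² log u / 2 - u² / 4`, a primitive of `u log u`. The substitution `ξ = z₀ + s w`
reduces every integral in sight to `∫₀¹ s log s = -1/4` and `∫₀¹ log s = -1`, because
`log (s w) = log s + log w` for `s > 0`. Hence, with `uᵢ(μ) = zᵢ - z₀(μ)`, near `μ₀`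
`I₁(μ) = c(μ) (F(u₂(μ)) - F(u₁(μ)))`, while the right-hand side evaluates to
`c'(μ₀) (F(u₂) - F(u₁)) - c(μ₀) z₀'(μ₀) (u₂ log u₂ - u₁ log u₁)`, which is what the product
and chain rules give.
-/

open MeasureTheory intervalIntegral Set

theorem integral_mul_log_zero_one : ∫ s in (0:ℝ)..1, s * Real.log s = -1 / 4 := by
  have hF : ∀ s ∈ Ioo (0:ℝ) 1,
      HasDerivAt (fun x => x * (x * Real.log x) / 2 - x ^ 2 / 4) (s * Real.log s) s := by
    intro s hs
    refine (((hasDerivAt_id s).mul (Real.hasDerivAt_mul_log hs.1.ne')).div_const 2 |>.sub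
      ((hasDerivAt_pow 2 s).div_const 4)).congr_deriv ?_
    simp only [id]
    ring
  have := integral_eq_sub_of_hasDerivAt_of_le zero_le_one
    (by fun_prop (disch := exact Real.continuous_mul_log) : ContinuousOn _ _) hF
    (Real.continuous_mul_log.intervalIntegrable 0 1)
  norm_num at this
  linarith

theorem integral_log_zero_one : ∫ s in (0:ℝ)..1, Real.log s = -1 := by
  simp

noncomputable def mulLogPrimitive (u : ℂ) : ℂ := u ^ 2 * log u / 2 - u ^ 2 / 4

theorem hasDerivAt_mulLogPrimitive {u : ℂ} (hu : u ∈ slitPlane) :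
    HasDerivAt mulLogPrimitive (u * log u) u := by
  refine (((hasDerivAt_pow 2 u).mul (hasDerivAt_log hu)).div_const 2 |>.sub
    ((hasDerivAt_pow 2 u).div_const 4)).congr_deriv ?_
  field_simp [slitPlane_ne_zero hu]
  ring

theorem segIntegral_swap (a b : ℂ) (g : ℂ → ℂ) : segIntegral b a g = -segIntegral a b g := by
  have := integral_comp_sub_left (a := 0) (b := 1)
    (fun s : ℝ => g (a + (s : ℂ) * (b - a)) * (a - b)) 1
  simp only [sub_zero, sub_self] at this
  simp only [segIntegral, ← intervalIntegral.integral_neg, ← mul_neg, neg_sub, ← this]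
  congr 1; ext s; congr 2; push_cast; ring

theorem segIntegral_self_add (z w : ℂ) (g : ℂ → ℂ) :
    segIntegral z (z + w) (fun ξ => g (ξ - z)) = ∫ s in (0:ℝ)..1, g (s * w) * w := by
  simp [segIntegral]

theorem integral_ray_mul_log_sub_log {w : ℂ} (hw : w ∈ slitPlane) (A B : ℂ) :
    ∫ s in (0:ℝ)..1, (A * (s * w) * log (s * w) - B * (log (s * w) + 1)) * w
      = A * mulLogPrimitive w - B * (w * log w) := by
  have hsplit : ∀ᵐ s : ℝ, s ∈ uIoc (0:ℝ) 1 →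
      (A * (s * w) * log (s * w) - B * (log (s * w) + 1)) * w
        = A * w ^ 2 * ((s * Real.log s : ℝ) : ℂ) + A * w ^ 2 * log w * (s : ℂ)
          - B * w * (Real.log s : ℂ) - B * w * (log w + 1) := by
    refine .of_forall fun s hs => ?_
    rw [uIoc_of_le zero_le_one] at hs
    rw [log_ofReal_mul hs.1 (slitPlane_ne_zero hw)]
    push_cast
    ring
  have i₁ : IntervalIntegrable (fun s : ℝ => A * w ^ 2 * ((s * Real.log s : ℝ) : ℂ)) volume 0 1 :=
    (continuous_ofReal.comp Real.continuous_mul_log).intervalIntegrable 0 1 |>.const_mul _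
  have i₂ : IntervalIntegrable (fun s : ℝ => A * w ^ 2 * log w * (s : ℂ)) volume 0 1 :=
    continuous_ofReal.intervalIntegrable 0 1 |>.const_mul _
  have i₃ : IntervalIntegrable (fun s : ℝ => B * w * (Real.log s : ℂ)) volume 0 1 :=
    have hlog := intervalIntegrable_log' (a := 0) (b := 1)
    IntervalIntegrable.const_mul ⟨hlog.1.ofReal, hlog.2.ofReal⟩ _
  rw [integral_congr_ae hsplit, integral_sub ((i₁.add i₂).sub i₃) intervalIntegrable_const,
    integral_sub (i₁.add i₂) i₃, integral_add i₁ i₂, intervalIntegral.integral_const_mul,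
    intervalIntegral.integral_const_mul, intervalIntegral.integral_const_mul,
    integral_ofReal, integral_ofReal, integral_ofReal, integral_mul_log_zero_one,
    integral_log_zero_one, integral_id, intervalIntegral.integral_const]
  simp only [mulLogPrimitive, real_smul]
  push_cast
  ring

theorem segIntegral_self_add_mul_log_sub_log {z w : ℂ} (hw : w ∈ slitPlane) (A B : ℂ) :
    segIntegral z (z + w) (fun ξ => A * (ξ - z) * log (ξ - z) - B * (log (ξ - z) + 1))
      = A * mulLogPrimitive w - B * (w * log w) :=
  (segIntegral_self_add z w fun u => A * u * log u - B * (log u + 1)).trans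
    (integral_ray_mul_log_sub_log hw A B)

theorem segIntegral_through_mul_log_sub_log {z a b : ℂ} (ha : a - z ∈ slitPlane)
    (hb : b - z ∈ slitPlane) (A B : ℂ) :
    segIntegral a z (fun ξ => A * (ξ - z) * log (ξ - z) - B * (log (ξ - z) + 1))
        + segIntegral z b (fun ξ => A * (ξ - z) * log (ξ - z) - B * (log (ξ - z) + 1))
      = A * (mulLogPrimitive (b - z) - mulLogPrimitive (a - z))
        - B * ((b - z) * log (b - z) - (a - z) * log (a - z)) := by
  have hfrom_a := segIntegral_self_add_mul_log_sub_log (z := z) ha A B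
  have hfrom_b := segIntegral_self_add_mul_log_sub_log (z := z) hb A B
  rw [add_sub_cancel] at hfrom_a hfrom_b
  rw [segIntegral_swap, hfrom_a, hfrom_b]
  ring

/-- Differentiating, with respect to the parameter `μ`, the contour integral of
`f(ξ,μ) = c(μ)·(ξ−z₀(μ))·log(ξ−z₀(μ))` along `[z₁,z₀(μ)] ∪ [z₀(μ),z₂]`: the derivative
at `μ₀` equals the contour integral of the `μ`-derivative of the integrand,
`g(ξ) = c′(μ₀)·(ξ−z₀(μ₀))·log(ξ−z₀(μ₀)) − c(μ₀)·z₀′(μ₀)·(log(ξ−z₀(μ₀)) + 1)`. -/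
theorem hasDerivAt_segIntegral_moving_log_singularity
    (c z₀ : ℝ → ℂ) (μ₀ : ℝ) (c' z₀' : ℂ)
    (hc : HasDerivAt c c' μ₀) (hz₀ : HasDerivAt z₀ z₀' μ₀)
    (z₁ z₂ : ℂ)
    (hcut : ∀ᶠ μ in 𝓝 μ₀,
      z₁ - z₀ μ ∈ Complex.slitPlane ∧ z₂ - z₀ μ ∈ Complex.slitPlane) :
    HasDerivAt
      (fun μ : ℝ =>
        segIntegral z₁ (z₀ μ) (fun ξ => c μ * (ξ - z₀ μ) * Complex.log (ξ - z₀ μ))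
          + segIntegral (z₀ μ) z₂ (fun ξ => c μ * (ξ - z₀ μ) * Complex.log (ξ - z₀ μ)))
      (segIntegral z₁ (z₀ μ₀)
          (fun ξ => c' * (ξ - z₀ μ₀) * Complex.log (ξ - z₀ μ₀)
            - c μ₀ * z₀' * (Complex.log (ξ - z₀ μ₀) + 1))
        + segIntegral (z₀ μ₀) z₂
            (fun ξ => c' * (ξ - z₀ μ₀) * Complex.log (ξ - z₀ μ₀)
              - c μ₀ * z₀' * (Complex.log (ξ - z₀ μ₀) + 1)))
      μ₀ := by
  obtain ⟨h₁, h₂⟩ := hcut.self_of_nhds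
  have hclosed : (fun μ => c μ * (mulLogPrimitive (z₂ - z₀ μ) - mulLogPrimitive (z₁ - z₀ μ)))
      =ᶠ[𝓝 μ₀] fun μ =>
        segIntegral z₁ (z₀ μ) (fun ξ => c μ * (ξ - z₀ μ) * Complex.log (ξ - z₀ μ))
          + segIntegral (z₀ μ) z₂ (fun ξ => c μ * (ξ - z₀ μ) * Complex.log (ξ - z₀ μ)) :=
    hcut.mono fun μ hμ => by
      simpa using (segIntegral_through_mul_log_sub_log hμ.1 hμ.2 (c μ) 0).symm
  have hderiv := hc.mul (((hasDerivAt_mulLogPrimitive h₂).comp μ₀ (hz₀.const_sub z₂)).sub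
    ((hasDerivAt_mulLogPrimitive h₁).comp μ₀ (hz₀.const_sub z₁)))
  rw [segIntegral_through_mul_log_sub_log h₁ h₂]
  refine (hderiv.congr_of_eventuallyEq hclosed.symm).congr_deriv ?_
  simp only [Pi.sub_apply, Function.comp_apply]
  ring
end
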